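/- arXiv:2601.01390 — 2 statements merged into one kernel-verified Lean document; each statement's English description precedes it below -/
import Mathlib

section
/- Let X be a finite set of positive integers, let k ≥ 1 be an integer, and let H be a finite family of functions from X to {1,…,k²} such that every subset S ⊆ X with |S| ≤ k is mapped injectively by some h ∈ H. For h ∈ H and j ∈ {1,…,k²}, let X_{h,j} = {x ∈ X : h(x) = j}, and let T_h denote the sumset (X_{h,1} ∪ {0}) + (X_{h,2} ∪ {0}) + ⋯ + (X_{h,k²} ∪ {0}). Then SUMS_{≤k}(X) ⊆ ⋃_{h∈H} T_h, and T_h ⊆ SUMS(X) for every h ∈ H. -/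
open Pointwise

/-- `SUM S` is the sum of the elements of the finite set `S`. -/
def SUM (S : Finset ℕ) : ℕ := S.sum id

/-- `SUMSle X k` is the set of all subset sums of `X` using at most `k` elements. -/
def SUMSle (X : Finset ℕ) (k : ℕ) : Set ℕ := {y | ∃ S ⊆ X, S.card ≤ k ∧ SUM S = y}

/-- `SUMS X` is the set of all subset sums of `X`. -/
def SUMS (X : Finset ℕ) : Set ℕ := {y | ∃ S ⊆ X, SUM S = y}

theorem stmt_11 (X : Finset ℕ) (hpos : ∀ x ∈ X, 0 < x) (k : ℕ) (hk : 1 ≤ k)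
    (H : Finset (ℕ → ℕ))
    (hrange : ∀ h ∈ H, ∀ x ∈ X, h x ∈ Finset.Icc 1 (k ^ 2))
    (hperf : ∀ S ⊆ X, S.card ≤ k → ∃ h ∈ H, Set.InjOn h (S : Set ℕ)) :
    SUMSle X k ⊆
      (⋃ h ∈ H, ∑ j ∈ Finset.Icc 1 (k ^ 2),
        (((X.filter (fun x => h x = j)) : Set ℕ) ∪ {0})) ∧
    ∀ h ∈ H, (∑ j ∈ Finset.Icc 1 (k ^ 2),
        (((X.filter (fun x => h x = j)) : Set ℕ) ∪ {0})) ⊆ SUMS X := by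
  classical
  constructor
  · rintro y ⟨S, hSX, hScard, rfl⟩
    obtain ⟨h, hH, hinj⟩ := hperf S hSX hScard
    refine Set.mem_iUnion₂.2 ⟨h, hH, ?_⟩
    rw [Set.mem_finset_sum]
    refine ⟨fun j => SUM (S.filter (fun x => h x = j)), ?_, ?_⟩
    · intro j hj
      rcases (S.filter (fun x => h x = j)).eq_empty_or_nonempty with he | ⟨x, hx⟩
      · right
        simp [SUM, he]
      · have hcard : (S.filter (fun x => h x = j)).card ≤ 1 := by
          apply Finset.card_le_one.2
          intro a ha b hb
          simp only [Finset.mem_filter] at ha hb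
          exact hinj ha.1 hb.1 (ha.2.trans hb.2.symm)
        have hsing : S.filter (fun x => h x = j) = {x} := by
          apply Finset.eq_singleton_iff_unique_mem.2
          refine ⟨hx, fun b hb => Finset.card_le_one.1 hcard b hb x hx⟩
        simp only [Finset.mem_filter] at hx
        left
        simp only [hsing, SUM, Finset.sum_singleton, id]
        exact Finset.mem_coe.2 (Finset.mem_filter.2 ⟨hSX hx.1, hx.2⟩)
    · simp only [SUM]
      exact Finset.sum_fiberwise_of_maps_to (fun x hx => hrange h hH x (hSX hx)) id
  · intro h hH y hy
    rw [Set.mem_finset_sum] at hy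
    obtain ⟨g, hg, rfl⟩ := hy
    set T := (Finset.Icc 1 (k ^ 2)).filter (fun j => g j ≠ 0) with hT
    have hgX : ∀ j ∈ T, g j ∈ X ∧ h (g j) = j := by
      intro j hj
      simp only [hT, Finset.mem_filter] at hj
      rcases hg hj.1 with hx | hx
      · simpa using Finset.mem_filter.1 (Finset.mem_coe.1 hx)
      · exact absurd hx hj.2
    have hginj : ∀ j ∈ T, ∀ j' ∈ T, g j = g j' → j = j' := by
      intro j hj j' hj' he
      rw [← (hgX j hj).2, ← (hgX j' hj').2, he]
    refine ⟨T.image g, ?_, ?_⟩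
    · intro x hx
      obtain ⟨j, hj, rfl⟩ := Finset.mem_image.1 hx
      exact (hgX j hj).1
    · rw [SUM, Finset.sum_image hginj]
      simp only [id]
      rw [hT, Finset.sum_filter_ne_zero]
end

section
/- Let t ≥ 1 be an integer, let X be a finite set of positive integers contained in {1,…,t}, let m = ⌊log₂ t⌋ + 1, and for i = 1,…,m let X_i = {x ∈ X : t/2^i < x ≤ t/2^{i−1}}. Then the sets X_1,…,X_m partition X, and SUMS(X) ∩ [t] = ((SUMS_{≤2}(X_1) ∩ [t]) + (SUMS_{≤4}(X_2) ∩ [t]) + ⋯ + (SUMS_{≤2^m}(X_m) ∩ [t])) ∩ [t]. -/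
open Pointwise

/-!
Every `x ∈ [1, t]` lies in exactly one dyadic block `t / 2 ^ i < x ≤ t / 2 ^ (i - 1)` with
`1 ≤ i ≤ ⌊log₂ t⌋ + 1`, so subset sums of `X` split as sums of subset sums of the blocks.
Since `x > t / 2 ^ i` on the `i`-th block, a subset of it with sum at most `t` has at most
`2 ^ i` elements, so restricting the block sums to `≤ 2 ^ i` summands loses nothing below `t`.
-/

theorem SUMS_union {A B : Finset ℕ} (h : Disjoint A B) : SUMS (A ∪ B) = SUMS A + SUMS B := by
  classical
  ext y
  constructor
  · rintro ⟨S, hS, rfl⟩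
    refine ⟨SUM (S.filter (· ∈ A)), ⟨_, fun x hx => (Finset.mem_filter.1 hx).2, rfl⟩,
      SUM (S.filter (· ∉ A)), ⟨_, fun x hx => ?_, rfl⟩, Finset.sum_filter_add_sum_filter_not ..⟩
    obtain ⟨hxS, hxA⟩ := Finset.mem_filter.1 hx
    exact (Finset.mem_union.1 (hS hxS)).resolve_left hxA
  · intro hy
    obtain ⟨_, ⟨S, hSA, rfl⟩, _, ⟨T, hTB, rfl⟩, rfl⟩ := Set.mem_add.1 hy
    exact ⟨S ∪ T, Finset.union_subset_union hSA hTB, Finset.sum_union (h.mono hSA hTB)⟩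

theorem SUMS_empty : SUMS ∅ = {0} := by
  ext y
  simp [SUMS, SUM, eq_comm]

theorem SUMS_biUnion {ι : Type*} [DecidableEq ι] (I : Finset ι) (Y : ι → Finset ℕ)
    (hY : (I : Set ι).PairwiseDisjoint Y) : SUMS (I.biUnion Y) = ∑ i ∈ I, SUMS (Y i) := by
  induction I using Finset.induction_on with
  | empty => simp [SUMS_empty, Set.singleton_zero]
  | insert a I ha ih =>
    rw [Finset.coe_insert, Set.pairwiseDisjoint_insert] at hY
    have hdisj : Disjoint (Y a) (I.biUnion Y) :=
      (Finset.disjoint_biUnion_right _ _ _).2 fun j hj => hY.2 j hj (ne_of_mem_of_not_mem hj ha).symm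
    rw [Finset.biUnion_insert, SUMS_union hdisj, Finset.sum_insert ha, ih hY.1]

theorem finsetSum_inter_Iic {ι α : Type*} [AddCommMonoid α] [PartialOrder α]
    [CanonicallyOrderedAdd α] (I : Finset ι) (A : ι → Set α) (t : α) :
    (∑ i ∈ I, A i) ∩ Set.Iic t = (∑ i ∈ I, (A i ∩ Set.Iic t)) ∩ Set.Iic t := by
  refine subset_antisymm ?_
    (Set.inter_subset_inter_left _ (Set.finsetSum_subset_finsetSum _ _ _ fun i _ => by simp))
  rintro y ⟨hy, hyt⟩
  obtain ⟨g, hg, rfl⟩ := (Set.mem_finsetSum _ _ _).1 hy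
  refine ⟨(Set.mem_finsetSum _ _ _).2 ⟨g, fun {i} hi => ⟨hg hi, ?_⟩, rfl⟩, hyt⟩
  exact (Finset.single_le_sum (fun _ _ => zero_le) hi).trans hyt

theorem card_le_of_lt_mul_of_SUM_le {S : Finset ℕ} {t k : ℕ} (h : ∀ x ∈ S, t < x * k)
    (hS : SUM S ≤ t) : S.card ≤ k := by
  rcases S.eq_empty_or_nonempty with rfl | hne
  · simp
  have : S.card * t < k * t :=
    calc S.card * t = ∑ _x ∈ S, t := by simp
      _ < ∑ x ∈ S, x * k := Finset.sum_lt_sum_of_nonempty hne h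
      _ = SUM S * k := (Finset.sum_mul ..).symm
      _ ≤ t * k := Nat.mul_le_mul_right k hS
      _ = k * t := mul_comm ..
  exact (Nat.lt_of_mul_lt_mul_right this).le

theorem SUMS_inter_Iic_eq_SUMSle {Y : Finset ℕ} {t k : ℕ} (h : ∀ x ∈ Y, t < x * k) :
    SUMS Y ∩ Set.Iic t = SUMSle Y k ∩ Set.Iic t := by
  ext y
  constructor
  · rintro ⟨⟨S, hS, rfl⟩, hyt⟩
    exact ⟨⟨S, hS, card_le_of_lt_mul_of_SUM_le (fun x hx => h x (hS hx)) hyt, rfl⟩, hyt⟩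
  · rintro ⟨⟨S, hS, -, rfl⟩, hyt⟩
    exact ⟨⟨S, hS, rfl⟩, hyt⟩

theorem le_of_lt_mul_two_pow_of_mul_two_pow_le {t x i j : ℕ} (hi : t < x * 2 ^ i)
    (hj : x * 2 ^ (j - 1) ≤ t) (hj1 : 1 ≤ j) : j ≤ i := by
  have : 2 ^ (j - 1) < 2 ^ i := lt_of_mul_lt_mul_left (hj.trans_lt hi) (Nat.zero_le x)
  have := (Nat.pow_lt_pow_iff_right (by norm_num)).1 this
  omega

theorem exists_lt_mul_two_pow_and_mul_two_pow_le {t x : ℕ} (hx : 0 < x) (hxt : x ≤ t) :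
    ∃ i ∈ Finset.Icc 1 (Nat.log 2 t + 1), t < x * 2 ^ i ∧ x * 2 ^ (i - 1) ≤ t := by
  set k := Nat.log 2 (t / x)
  have hk : Nat.log 2 (t / x) ≤ Nat.log 2 t := Nat.log_mono_right (Nat.div_le_self t x)
  refine ⟨k + 1, Finset.mem_Icc.2 ⟨by omega, by omega⟩, ?_, ?_⟩
  · rw [mul_comm, ← Nat.div_lt_iff_lt_mul hx]
    exact Nat.lt_pow_succ_log_self (by norm_num) _
  · rw [Nat.add_sub_cancel, mul_comm, ← Nat.le_div_iff_mul_le hx]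
    exact Nat.pow_log_le_self 2 (Nat.div_pos hxt hx).ne'

theorem stmt_19_general (t : ℕ) (X : Finset ℕ)
    (hX : ∀ x ∈ X, x ∈ Finset.Icc 1 t)
    (m : ℕ) (hm : m = Nat.log 2 t + 1)
    (Xs : ℕ → Finset ℕ)
    (hXs : ∀ i x, x ∈ Xs i ↔
      x ∈ X ∧ (t : ℝ) / 2 ^ i < (x : ℝ) ∧ (x : ℝ) ≤ (t : ℝ) / 2 ^ (i - 1)) :
    ((∀ i ∈ Finset.Icc 1 m, ∀ j ∈ Finset.Icc 1 m, i ≠ j → Disjoint (Xs i) (Xs j)) ∧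
      (Finset.Icc 1 m).biUnion Xs = X) ∧
    SUMS X ∩ Set.Iic t =
      (∑ i ∈ Finset.Icc 1 m, (SUMSle (Xs i) (2 ^ i) ∩ Set.Iic t)) ∩ Set.Iic t := by
  have hXs' : ∀ i x, x ∈ Xs i ↔ x ∈ X ∧ t < x * 2 ^ i ∧ x * 2 ^ (i - 1) ≤ t := by
    intro i x
    rw [hXs, div_lt_iff₀ (by positivity), le_div_iff₀ (by positivity)]
    norm_cast
  have hdisj : ∀ i ∈ Finset.Icc 1 m, ∀ j ∈ Finset.Icc 1 m, i ≠ j → Disjoint (Xs i) (Xs j) := by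
    refine fun i hi j hj hij => Finset.disjoint_left.2 fun x hxi hxj => hij ?_
    obtain ⟨-, hti, hit⟩ := (hXs' i x).1 hxi
    obtain ⟨-, htj, hjt⟩ := (hXs' j x).1 hxj
    exact le_antisymm (le_of_lt_mul_two_pow_of_mul_two_pow_le htj hit (Finset.mem_Icc.1 hi).1)
      (le_of_lt_mul_two_pow_of_mul_two_pow_le hti hjt (Finset.mem_Icc.1 hj).1)
  have hunion : (Finset.Icc 1 m).biUnion Xs = X := by
    refine subset_antisymm (fun x hx => ?_) (fun x hx => ?_)
    · obtain ⟨i, -, hxi⟩ := Finset.mem_biUnion.1 hx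
      exact ((hXs' i x).1 hxi).1
    · obtain ⟨hx1, hxt⟩ := Finset.mem_Icc.1 (hX x hx)
      obtain ⟨i, hi, hlt, hle⟩ := exists_lt_mul_two_pow_and_mul_two_pow_le hx1 hxt
      exact Finset.mem_biUnion.2 ⟨i, hm ▸ hi, (hXs' i x).2 ⟨hx, hlt, hle⟩⟩
  refine ⟨⟨hdisj, hunion⟩, ?_⟩
  rw [← hunion, SUMS_biUnion _ _ hdisj, finsetSum_inter_Iic]
  congr 1
  exact Finset.sum_congr rfl fun i _ => SUMS_inter_Iic_eq_SUMSle fun x hx => ((hXs' i x).1 hx).2.1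

theorem stmt_19 (t : ℕ) (ht : 1 ≤ t) (X : Finset ℕ)
    (hX : ∀ x ∈ X, x ∈ Finset.Icc 1 t)
    (m : ℕ) (hm : m = Nat.log 2 t + 1)
    (Xs : ℕ → Finset ℕ)
    (hXs : ∀ i x, x ∈ Xs i ↔
      x ∈ X ∧ (t : ℝ) / 2 ^ i < (x : ℝ) ∧ (x : ℝ) ≤ (t : ℝ) / 2 ^ (i - 1)) :
    ((∀ i ∈ Finset.Icc 1 m, ∀ j ∈ Finset.Icc 1 m, i ≠ j → Disjoint (Xs i) (Xs j)) ∧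
      (Finset.Icc 1 m).biUnion Xs = X) ∧
    SUMS X ∩ Set.Iic t =
      (∑ i ∈ Finset.Icc 1 m, (SUMSle (Xs i) (2 ^ i) ∩ Set.Iic t)) ∩ Set.Iic t :=
  stmt_19_general t X hX m hm Xs hXs
end
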